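/- Let G and H be groups and let n ≥ 2 be an integer. A group homomorphism f : Gⁿ → H is invariant under the action of the symmetric group Sₙ permuting the n factors (i.e. f(g_{σ(1)},…,g_{σ(n)}) = f(g₁,…,g_n) for every permutation σ and all g₁,…,g_n ∈ G) if and only if there exists a group homomorphism f̃ : G_ab → H from the abelianization of G such that f(g₁,…,g_n) = f̃(α(g₁)·α(g₂)⋯α(g_n)) for all g₁,…,g_n ∈ G, where α : G → G_ab is the abelianization homomorphism. -/
import Mathlib

private lemma list_ofFn_mulSingle_prod {M : Type*} [Monoid M] :
    ∀ (n : ℕ) (j : Fin n) (x : M), (List.ofFn (Pi.mulSingle j x : Fin n → M)).prod = x := by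
  intro n
  induction n with
  | zero => exact fun j => j.elim0
  | succ m ih =>
    intro j x
    rw [List.ofFn_succ]
    rcases Fin.eq_zero_or_eq_succ j with hj | ⟨k, hk⟩
    · subst hj
      rw [List.prod_cons, Pi.mulSingle_eq_same]
      have : (List.ofFn fun i : Fin m => (Pi.mulSingle (0 : Fin (m+1)) x : Fin (m+1) → M) i.succ).prod = 1 := by
        apply List.prod_eq_one
        intro y hy
        rw [List.mem_ofFn] at hy
        obtain ⟨i, rfl⟩ := hy
        exact Pi.mulSingle_eq_of_ne (Fin.succ_ne_zero i) x
      rw [this, mul_one]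
    · subst hk
      rw [List.prod_cons, Pi.mulSingle_eq_of_ne (Fin.succ_ne_zero k).symm, one_mul]
      have : (fun i : Fin m => (Pi.mulSingle k.succ x : Fin (m+1) → M) i.succ) =
          (Pi.mulSingle k x : Fin m → M) := by
        funext i
        rcases eq_or_ne i k with hik | hik
        · subst hik; rw [Pi.mulSingle_eq_same, Pi.mulSingle_eq_same]
        · rw [Pi.mulSingle_eq_of_ne (fun h => hik (Fin.succ_injective m h)),
            Pi.mulSingle_eq_of_ne hik]
      rw [this, ih]

private lemma eq_list_ofFn_mulSingle_prod {M : Type*} [Monoid M] {n : ℕ} (g : Fin n → M) :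
    g = (List.ofFn fun i => (Pi.mulSingle i (g i) : Fin n → M)).prod := by
  funext j
  rw [Pi.list_prod_apply, List.map_ofFn]
  have : ((fun f : Fin n → M => f j) ∘ fun i => (Pi.mulSingle i (g i) : Fin n → M)) =
      (Pi.mulSingle j (g j) : Fin n → M) := by
    funext i
    simp only [Function.comp]
    rcases eq_or_ne i j with hij | hij
    · subst hij; simp
    · rw [Pi.mulSingle_eq_of_ne (Ne.symm hij), Pi.mulSingle_eq_of_ne hij]
  rw [this, list_ofFn_mulSingle_prod]

/-- A group homomorphism `f : Gⁿ → H` is invariant under the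
permutation action of `Sₙ` on the factors if and only if it factors as
`f = f̃ ∘ (product of abelianizations)`. -/
theorem sn_invariant_hom_iff_factors_through_abelianization
    {G H : Type*} [Group G] [Group H] (n : ℕ) (hn : 2 ≤ n)
    (f : (Fin n → G) →* H) :
    (∀ (σ : Equiv.Perm (Fin n)) (g : Fin n → G), f (fun i => g (σ i)) = f g) ↔
      (∃ ftilde : Abelianization G →* H,
        ∀ g : Fin n → G, f g = ftilde (∏ i, Abelianization.of (g i))) := by
  haveI : NeZero n := ⟨by omega⟩
  have h01 : (0 : Fin n) ≠ (1 : Fin n) := by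
    have : (0 : Fin n).val ≠ (1 : Fin n).val := by
      simp [Fin.val_one', Nat.mod_eq_of_lt (by omega : 1 < n)]
    exact fun h => this (by rw [h])
  constructor
  · intro hinv
    set φ : G →* H := f.comp (MonoidHom.mulSingle (fun _ : Fin n => G) 0) with hφ
    -- any coordinate gives φ
    have hcoord : ∀ (i : Fin n) (a : G), f (Pi.mulSingle i a) = φ a := by
      intro i a
      have h2 : (fun j => (Pi.mulSingle i a : Fin n → G) (Equiv.swap 0 i j)) =
          (Pi.mulSingle (0 : Fin n) a : Fin n → G) := by
        funext j
        by_cases hj : j = 0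
        · subst hj
          rw [Equiv.swap_apply_left, Pi.mulSingle_eq_same, Pi.mulSingle_eq_same]
        · have h3 : Equiv.swap 0 i j ≠ i := by
            intro h
            have h4 := congrArg (Equiv.swap 0 i) h
            rw [Equiv.swap_apply_self, Equiv.swap_apply_right] at h4
            exact hj h4
          rw [Pi.mulSingle_eq_of_ne h3, Pi.mulSingle_eq_of_ne hj]
      calc f (Pi.mulSingle i a)
          = f (fun j => (Pi.mulSingle i a : Fin n → G) (Equiv.swap 0 i j)) :=
            (hinv (Equiv.swap 0 i) (Pi.mulSingle i a)).symm
        _ = f (Pi.mulSingle 0 a) := by rw [h2]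
        _ = φ a := rfl
    -- images of φ commute
    have hcomm : ∀ a b : G, φ a * φ b = φ b * φ a := by
      intro a b
      have h1 : ((Pi.mulSingle (0 : Fin n) a) * (Pi.mulSingle (1 : Fin n) b) : Fin n → G) =
          fun j => ((Pi.mulSingle (0 : Fin n) b) * (Pi.mulSingle (1 : Fin n) a) : Fin n → G)
            (Equiv.swap 0 1 j) := by
        funext j
        simp only [Pi.mul_apply]
        rcases eq_or_ne j 0 with hj | hj
        · subst hj
          rw [Equiv.swap_apply_left, Pi.mulSingle_eq_same, Pi.mulSingle_eq_of_ne h01,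
            Pi.mulSingle_eq_of_ne (Ne.symm h01), Pi.mulSingle_eq_same, one_mul, mul_one]
        · rcases eq_or_ne j 1 with hj1 | hj1
          · subst hj1
            rw [Equiv.swap_apply_right, Pi.mulSingle_eq_same, Pi.mulSingle_eq_of_ne h01,
              Pi.mulSingle_eq_of_ne (Ne.symm h01), Pi.mulSingle_eq_same, one_mul, mul_one]
          · rw [Equiv.swap_apply_of_ne_of_ne hj hj1, Pi.mulSingle_eq_of_ne hj,
              Pi.mulSingle_eq_of_ne hj1, Pi.mulSingle_eq_of_ne hj, Pi.mulSingle_eq_of_ne hj1]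
      calc φ a * φ b = f (Pi.mulSingle 0 a) * f (Pi.mulSingle 1 b) := by
              rw [hcoord 0 a, hcoord 1 b]
        _ = f ((Pi.mulSingle (0 : Fin n) a) * (Pi.mulSingle (1 : Fin n) b) : Fin n → G) :=
              (map_mul f _ _).symm
        _ = f ((Pi.mulSingle (0 : Fin n) b) * (Pi.mulSingle (1 : Fin n) a) : Fin n → G) := by
              rw [h1]; exact hinv (Equiv.swap 0 1) _
        _ = f (Pi.mulSingle 0 b) * f (Pi.mulSingle 1 a) := map_mul f _ _
        _ = φ b * φ a := by rw [hcoord 0 b, hcoord 1 a]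
    -- the commutator subgroup is killed by φ
    have hker : commutator G ≤ φ.ker := by
      rw [commutator, Subgroup.commutator_le]
      intro g _ h _
      simp only [MonoidHom.mem_ker, commutatorElement_def]
      rw [map_mul, map_mul, map_mul, map_inv, map_inv, hcomm g h]
      group
    set ft : Abelianization G →* H := QuotientGroup.lift (commutator G) φ hker with hftdef
    refine ⟨ft, ?_⟩
    intro g
    have lhs : f g = (List.ofFn fun i => φ (g i)).prod := by
      conv_lhs => rw [eq_list_ofFn_mulSingle_prod g]
      rw [map_list_prod, List.map_ofFn]
      have h6 : (⇑f ∘ fun i => (Pi.mulSingle i (g i) : Fin n → G)) = fun i => φ (g i) :=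
        funext fun i => hcoord i (g i)
      rw [h6]
    have h5 : (∏ i, Abelianization.of (g i)) =
        (List.ofFn fun i => Abelianization.of (g i)).prod :=
      (Fin.prod_ofFn (fun i => Abelianization.of (g i))).symm
    have rhs : ft (∏ i, Abelianization.of (g i)) =
        (List.ofFn fun i => φ (g i)).prod := by
      rw [h5, map_list_prod, List.map_ofFn]
      rfl
    rw [lhs, rhs]
  · rintro ⟨ft, hft⟩ σ g
    rw [hft, hft]
    congr 1
    exact Equiv.prod_comp σ (fun i => Abelianization.of (g i))
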